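/- On an infinitesimally Kobayashi non-degenerate complex manifold M, every semi-Bloch function is normal: 𝓑(M) ⊂ 𝓢𝓑(M) ⊂ 𝓝(M). -/

import Mathlib

/-!
Bloch ⇒ semi-Bloch: the spherical derivative of `exp (λ f)` is `|λ f'| / cosh (Re λ f) ≤ |λ f'|`.

Semi-Bloch ⇒ normal uses only `λ = 1`. For an analytic disk `φ` in `M`, precomposing with the
disk automorphisms turns the normality of `exp f` into `|g'(ζ)| (1 - |ζ|²) ≤ B cosh (Re g ζ)`
for `g = f ∘ φ`. Since the Gudermannian `gd` has derivative `1 / cosh`, this makes `gd ∘ Re g`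
Lipschitz on the disk of radius `1 / (2B)`; so if `Re g(0) ≥ 1` then `Re g > 0` there, and the
Schwarz lemma for the half-plane gives `|g'(0)| ≤ 4B Re g(0)`. With the symmetric case and the
trivial case `|Re g(0)| ≤ 1`, `|g'(0)| ≤ 4B(1 + |g(0)|)`, which bounds the spherical derivative
of `f` by `16 B` times the Kobayashi–Royden metric.
-/

open Metric Set Filter

noncomputable section

/-- The unit disk in ℂ. -/
def unitDisk : Set ℂ := Metric.ball 0 1

variable {E : Type*} [NormedAddCommGroup E] [NormedSpace ℂ E]

/-- An analytic disk in `M`: a holomorphic map from the unit disk into `M`. -/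
def AnalyticDiskIn (M : Set E) (φ : ℂ → E) : Prop :=
  DifferentiableOn ℂ φ unitDisk ∧ Set.MapsTo φ unitDisk M

/-- The infinitesimal Kobayashi–Royden pseudometric. -/
def kobayashi (M : Set E) (z ξ : E) : ℝ :=
  sInf { r : ℝ | ∃ (φ : ℂ → E) (a : ℂ), AnalyticDiskIn M φ ∧ φ 0 = z ∧
    deriv φ 0 = a • ξ ∧ a ≠ 0 ∧ r = 1 / ‖a‖ }

/-- The infinitesimal spherical metric `χ(w, ξ) = 2|ξ|/(1+|w|²)`. -/
def sphMetric (w ξ : ℂ) : ℝ := 2 * ‖ξ‖ / (1 + ‖w‖ ^ 2)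

/-- `g` is a normal function on `M`. -/
def NormalOn (M : Set E) (g : E → ℂ) : Prop :=
  ∃ C : ℝ, ∀ z ∈ M, ∀ ξ : E, sphMetric (g z) (fderiv ℂ g z ξ) ≤ C * kobayashi M z ξ

/-- `f` is a Bloch function on `M`. -/
def BlochOn (M : Set E) (f : E → ℂ) : Prop :=
  ∃ C : ℝ, ∀ z ∈ M, ∀ ξ : E, ‖fderiv ℂ f z ξ‖ ≤ C * kobayashi M z ξ

/-- `f` is semi-Bloch on `M`: `exp (λ f)` is normal for every `λ ∈ ℂ`. -/
def SemiBloch (M : Set E) (f : E → ℂ) : Prop :=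
  ∀ lam : ℂ, NormalOn M (fun z => Complex.exp (lam * f z))

/-- `M` is infinitesimally Kobayashi non-degenerate. -/
def KobayashiNondegenerate (M : Set E) : Prop :=
  ∀ z ∈ M, ∀ ξ : E, ξ ≠ 0 → 0 < kobayashi M z ξ

/-- `D(w₀, r)` is a schlicht disk in the range of `f`. -/
def SchlichtRadius (M : Set E) (f : E → ℂ) (w₀ : ℂ) (r : ℝ) : Prop :=
  ∃ h : ℂ → E, DifferentiableOn ℂ h unitDisk ∧ Set.MapsTo h unitDisk M ∧
    DifferentiableOn ℂ (f ∘ h) unitDisk ∧ Set.BijOn (f ∘ h) unitDisk (Metric.ball w₀ r)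

/-- A (real-affine) line in the complex plane. -/
def IsLine (L : Set ℂ) : Prop :=
  ∃ a b : ℂ, b ≠ 0 ∧ L = {z : ℂ | ∃ t : ℝ, z = a + t * b}

/-- The chordal (spherical) distance on ℂ ⊂ ℂ̂. -/
def chordal (w z : ℂ) : ℝ :=
  2 * dist w z / (Real.sqrt (1 + ‖w‖ ^ 2) * Real.sqrt (1 + ‖z‖ ^ 2))

/-- A sequence of functions on the unit disk is a normal family with respect to the
spherical metric: every subsequence has a further subsequence converging locally
uniformly on the disk, either spherically to a function or uniformly to `∞` on compacta. -/
def SphNormalFamily (g : ℕ → ℂ → ℂ) : Prop :=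
  ∀ s : ℕ → ℕ, ∃ t : ℕ → ℕ, StrictMono t ∧
    ((∃ h : ℂ → ℂ, ∀ K ⊆ unitDisk, IsCompact K → ∀ ε > 0,
        ∀ᶠ j in Filter.atTop, ∀ x ∈ K, chordal (g (s (t j)) x) (h x) < ε) ∨
      (∀ K ⊆ unitDisk, IsCompact K → ∀ C : ℝ,
        ∀ᶠ j in Filter.atTop, ∀ x ∈ K, C ≤ ‖g (s (t j)) x‖))



open Complex ComplexConjugate

lemma zero_mem_unitDisk : (0 : ℂ) ∈ unitDisk := mem_ball_self one_pos

lemma kobayashi_nonneg (M : Set E) (z ξ : E) : 0 ≤ kobayashi M z ξ :=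
  Real.sInf_nonneg <| by
    rintro r ⟨φ, a, -, -, -, -, rfl⟩
    positivity

section Kobayashi

variable {M : Set E} {z ξ : E}

lemma kobayashi_le_one_div_norm {φ : ℂ → E} {a : ℂ} (hφ : AnalyticDiskIn M φ) (h₀ : φ 0 = z)
    (hd : deriv φ 0 = a • ξ) (ha : a ≠ 0) : kobayashi M z ξ ≤ 1 / ‖a‖ :=
  csInf_le ⟨0, by rintro r ⟨ψ, b, -, -, -, -, rfl⟩; positivity⟩ ⟨φ, a, hφ, h₀, hd, ha, rfl⟩

lemma exists_analyticDiskIn_deriv_eq_smul (hM : IsOpen M) (hz : z ∈ M) (ξ : E) :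
    ∃ (φ : ℂ → E) (a : ℂ), AnalyticDiskIn M φ ∧ φ 0 = z ∧ deriv φ 0 = a • ξ ∧ a ≠ 0 := by
  obtain ⟨ρ, hρ, hball⟩ := Metric.isOpen_iff.1 hM z hz
  set ε : ℝ := ρ / (‖ξ‖ + 1)
  have hε : 0 < ε := by positivity
  have hεξ : ε * ‖ξ‖ < ρ := by
    rw [div_mul_eq_mul_div, div_lt_iff₀ (by positivity)]
    linarith
  have hd : HasDerivAt (fun w : ℂ => z + w • (ε : ℂ) • ξ) ((ε : ℂ) • ξ) 0 := by
    simpa using ((hasDerivAt_id (0 : ℂ)).smul_const ((ε : ℂ) • ξ)).const_add z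
  refine ⟨fun w => z + w • (ε : ℂ) • ξ, ε, ⟨?_, fun w hw => hball ?_⟩, by simp, hd.deriv,
    by exact_mod_cast hε.ne'⟩
  · fun_prop
  · have hw : ‖w‖ < 1 := mem_ball_zero_iff.1 hw
    rw [mem_ball, dist_eq_norm, add_sub_cancel_left, norm_smul, norm_smul, norm_real,
      Real.norm_of_nonneg hε.le]
    nlinarith [norm_nonneg w, norm_nonneg ξ, mul_nonneg hε.le (norm_nonneg ξ)]

lemma le_mul_kobayashi (hM : IsOpen M) (hz : z ∈ M) {x c : ℝ} (hc : 0 < c)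
    (h : ∀ (φ : ℂ → E) (a : ℂ), AnalyticDiskIn M φ → φ 0 = z → deriv φ 0 = a • ξ → a ≠ 0 →
      x * ‖a‖ ≤ c) :
    x ≤ c * kobayashi M z ξ := by
  obtain ⟨φ, a, hφ, h₀, hd, ha⟩ := exists_analyticDiskIn_deriv_eq_smul hM hz ξ
  rw [← div_le_iff₀' hc]
  refine le_csInf ⟨_, φ, a, hφ, h₀, hd, ha, rfl⟩ ?_
  rintro r ⟨φ, a, hφ, h₀, hd, ha, rfl⟩
  rw [div_le_iff₀ hc, one_div, ← div_eq_inv_mul, le_div_iff₀ (norm_pos_iff.2 ha)]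
  exact h φ a hφ h₀ hd ha

end Kobayashi

/-- The automorphism of the unit disk sending `0` to `ζ`. -/
def diskAut (ζ w : ℂ) : ℂ := (w + ζ) / (1 + conj ζ * w)

section DiskAut

variable {ζ w : ℂ}

lemma one_add_conj_mul_ne_zero (hζ : ζ ∈ unitDisk) (hw : w ∈ unitDisk) :
    1 + conj ζ * w ≠ 0 := by
  intro h
  have hlt : ‖conj ζ * w‖ < 1 := by
    rw [norm_mul, RCLike.norm_conj]
    exact mul_lt_one_of_nonneg_of_lt_one_left (norm_nonneg ζ) (mem_ball_zero_iff.1 hζ)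
      (mem_ball_zero_iff.1 hw).le
  rw [show conj ζ * w = -1 by linear_combination h, norm_neg, norm_one] at hlt
  exact hlt.false

lemma norm_one_add_conj_mul_sq_sub_norm_add_sq (ζ w : ℂ) :
    ‖1 + conj ζ * w‖ ^ 2 - ‖w + ζ‖ ^ 2 = (1 - ‖ζ‖ ^ 2) * (1 - ‖w‖ ^ 2) := by
  simp only [← normSq_eq_norm_sq, normSq_apply, add_re, add_im, mul_re, mul_im, conj_re, conj_im,
    one_re, one_im]
  ring

lemma diskAut_mapsTo (hζ : ζ ∈ unitDisk) : MapsTo (diskAut ζ) unitDisk unitDisk := by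
  intro w hw
  have hpos : 0 < (1 - ‖ζ‖ ^ 2) * (1 - ‖w‖ ^ 2) := by
    have := mem_ball_zero_iff.1 hζ
    have := mem_ball_zero_iff.1 hw
    apply mul_pos <;> nlinarith [norm_nonneg ζ, norm_nonneg w]
  rw [unitDisk, mem_ball_zero_iff, diskAut, norm_div,
    div_lt_one (norm_pos_iff.2 (one_add_conj_mul_ne_zero hζ hw)),
    ← pow_lt_pow_iff_left₀ (norm_nonneg _) (norm_nonneg _) two_ne_zero]
  linarith [norm_one_add_conj_mul_sq_sub_norm_add_sq ζ w]

lemma differentiableOn_diskAut (hζ : ζ ∈ unitDisk) : DifferentiableOn ℂ (diskAut ζ) unitDisk :=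
  fun _ hw => ((differentiableAt_id.add_const ζ).div
    ((differentiableAt_id.const_mul _).const_add 1)
    (one_add_conj_mul_ne_zero hζ hw)).differentiableWithinAt

lemma diskAut_zero (ζ : ℂ) : diskAut ζ 0 = ζ := by simp [diskAut]

lemma hasDerivAt_diskAut_zero (ζ : ℂ) :
    HasDerivAt (diskAut ζ) ((1 - ‖ζ‖ ^ 2 : ℝ) : ℂ) 0 := by
  refine (((hasDerivAt_id (0 : ℂ)).add_const ζ).div
    (((hasDerivAt_id (0 : ℂ)).const_mul (conj ζ)).const_add 1) (by simp)).congr_deriv ?_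
  simp [mul_conj']

end DiskAut

lemma AnalyticDiskIn.comp_diskAut {M : Set E} {φ : ℂ → E} (hφ : AnalyticDiskIn M φ) {ζ : ℂ}
    (hζ : ζ ∈ unitDisk) : AnalyticDiskIn M (φ ∘ diskAut ζ) :=
  ⟨hφ.1.comp (differentiableOn_diskAut hζ) (diskAut_mapsTo hζ), hφ.2.comp (diskAut_mapsTo hζ)⟩

lemma AnalyticDiskIn.kobayashi_le {M : Set E} {φ : ℂ → E} (hφ : AnalyticDiskIn M φ) {ζ : ℂ}
    (hζ : ζ ∈ unitDisk) : kobayashi M (φ ζ) (deriv φ ζ) ≤ 1 / (1 - ‖ζ‖ ^ 2) := by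
  have hs : 0 < 1 - ‖ζ‖ ^ 2 := by
    nlinarith [mem_ball_zero_iff.1 hζ, norm_nonneg ζ]
  have hφζ : HasDerivAt φ (deriv φ ζ) (diskAut ζ 0) := by
    rw [diskAut_zero]
    exact (hφ.1.differentiableAt (isOpen_ball.mem_nhds hζ)).hasDerivAt
  have h := kobayashi_le_one_div_norm (z := φ ζ) (hφ.comp_diskAut hζ)
    (by rw [Function.comp_apply, diskAut_zero])
    (hφζ.scomp 0 (hasDerivAt_diskAut_zero ζ)).deriv (ofReal_ne_zero.2 hs.ne')
  rwa [norm_real, Real.norm_of_nonneg hs.le] at h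

lemma sphMetric_exp_mul (w D : ℂ) : sphMetric (exp w) (exp w * D) = ‖D‖ / Real.cosh w.re := by
  have he : 0 < Real.exp w.re := Real.exp_pos _
  rw [sphMetric, norm_mul, norm_exp, Real.cosh_eq, Real.exp_neg]
  field_simp
  ring

lemma sphMetric_fderiv_cexp {f : E → ℂ} {z : E} (hf : DifferentiableAt ℂ f z) (ξ : E) :
    sphMetric (exp (f z)) (fderiv ℂ (fun w => exp (f w)) z ξ)
      = ‖fderiv ℂ f z ξ‖ / Real.cosh (f z).re := by
  rw [hf.hasFDerivAt.cexp.fderiv, smul_apply, smul_eq_mul, sphMetric_exp_mul]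

lemma BlochOn.semiBloch {M : Set E} (hM : IsOpen M) {f : E → ℂ} (hf : DifferentiableOn ℂ f M)
    (hB : BlochOn M f) : SemiBloch M f := by
  obtain ⟨C, hC⟩ := hB
  refine fun lam => ⟨‖lam‖ * C, fun z hz ξ => ?_⟩
  have hfz := hf.differentiableAt (hM.mem_nhds hz)
  rw [sphMetric_fderiv_cexp (hfz.const_mul lam), fderiv_const_mul hfz, smul_apply, smul_eq_mul,
    norm_mul, mul_assoc]
  calc ‖lam‖ * ‖fderiv ℂ f z ξ‖ / Real.cosh (lam * f z).re
      ≤ ‖lam‖ * ‖fderiv ℂ f z ξ‖ := div_le_self (by positivity) (Real.one_le_cosh _)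
    _ ≤ ‖lam‖ * (C * kobayashi M z ξ) := by gcongr; exact hC z hz ξ

lemma NormalOn.exists_one_le_const {M : Set E} {g : E → ℂ} (hg : NormalOn M g) :
    ∃ C, 1 ≤ C ∧ ∀ z ∈ M, ∀ ξ : E, sphMetric (g z) (fderiv ℂ g z ξ) ≤ C * kobayashi M z ξ := by
  obtain ⟨C, hC⟩ := hg
  exact ⟨max C 1, le_max_right _ _, fun z hz ξ => (hC z hz ξ).trans <|
    mul_le_mul_of_nonneg_right (le_max_left _ _) (kobayashi_nonneg M z ξ)⟩

lemma norm_deriv_comp_mul_le_cosh {M : Set E} (hM : IsOpen M) {f : E → ℂ}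
    (hf : DifferentiableOn ℂ f M) {C : ℝ} (hC₀ : 0 ≤ C)
    (hC : ∀ z ∈ M, ∀ ξ : E,
      sphMetric (exp (f z)) (fderiv ℂ (fun w => exp (f w)) z ξ) ≤ C * kobayashi M z ξ)
    {φ : ℂ → E} (hφ : AnalyticDiskIn M φ) {ζ : ℂ} (hζ : ζ ∈ unitDisk) :
    ‖deriv (f ∘ φ) ζ‖ * (1 - ‖ζ‖ ^ 2) ≤ C * Real.cosh (f (φ ζ)).re := by
  have hs : 0 < 1 - ‖ζ‖ ^ 2 := by
    nlinarith [mem_ball_zero_iff.1 hζ, norm_nonneg ζ]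
  have hfz := hf.differentiableAt (hM.mem_nhds (hφ.2 hζ))
  have hsph := hC _ (hφ.2 hζ) (deriv φ ζ)
  rw [sphMetric_fderiv_cexp hfz,
    ← fderiv_comp_deriv ζ hfz (hφ.1.differentiableAt (isOpen_ball.mem_nhds hζ))] at hsph
  set u := (f (φ ζ)).re
  have hcosh : 0 < Real.cosh u := Real.cosh_pos u
  calc ‖deriv (f ∘ φ) ζ‖ * (1 - ‖ζ‖ ^ 2)
      = ‖deriv (f ∘ φ) ζ‖ / Real.cosh u * (1 - ‖ζ‖ ^ 2) * Real.cosh u := by field_simp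
    _ ≤ C * (1 / (1 - ‖ζ‖ ^ 2)) * (1 - ‖ζ‖ ^ 2) * Real.cosh u := by
      gcongr
      exact hsph.trans (mul_le_mul_of_nonneg_left (hφ.kobayashi_le hζ) hC₀)
    _ = C * Real.cosh u := by field_simp

def gudermannian (u : ℝ) : ℝ := Real.arctan (Real.sinh u)

lemma hasDerivAt_gudermannian (u : ℝ) : HasDerivAt gudermannian (Real.cosh u)⁻¹ u := by
  refine (Real.hasDerivAt_sinh u).arctan.congr_deriv ?_
  have hc : Real.cosh u ≠ 0 := (Real.cosh_pos u).ne'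
  rw [← Real.cosh_sq', one_div]
  field_simp

lemma gudermannian_strictMono : StrictMono gudermannian :=
  Real.arctan_strictMono.comp Real.sinh_strictMono

lemma gudermannian_zero : gudermannian 0 = 0 := by simp [gudermannian]

lemma Real.one_le_sinh_one : 1 ≤ Real.sinh 1 := by
  rw [Real.sinh_eq, Real.exp_neg]
  have he := Real.exp_one_gt_d9
  have hinv : (Real.exp 1)⁻¹ < 1 / 2.7 := by
    rw [inv_lt_comm₀ (Real.exp_pos 1) (by norm_num)]
    norm_num
    linarith
  linarith

lemma Real.cosh_one_le_two : Real.cosh 1 ≤ 2 := by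
  rw [Real.cosh_eq, Real.exp_neg]
  have he := Real.exp_one_lt_d9
  have hinv : (Real.exp 1)⁻¹ ≤ 1 := inv_le_one_of_one_le₀ (Real.one_le_exp zero_le_one)
  linarith

lemma pi_div_four_le_gudermannian {u : ℝ} (hu : 1 ≤ u) : Real.pi / 4 ≤ gudermannian u := by
  rw [← Real.arctan_one, gudermannian]
  exact Real.arctan_strictMono.monotone (Real.one_le_sinh_one.trans (Real.sinh_le_sinh.2 hu))

lemma abs_gudermannian_re_sub_le {s : Set ℂ} (hs : Convex ℝ s) (hso : IsOpen s) {g : ℂ → ℂ}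
    (hg : DifferentiableOn ℂ g s) {K : ℝ}
    (hK : ∀ w ∈ s, ‖deriv g w‖ ≤ K * Real.cosh (g w).re) {x y : ℂ} (hx : x ∈ s) (hy : y ∈ s) :
    |gudermannian (g y).re - gudermannian (g x).re| ≤ K * ‖y - x‖ := by
  have hK₀ : 0 ≤ K := nonneg_of_mul_nonneg_left ((norm_nonneg _).trans (hK x hx))
    (Real.cosh_pos _)
  have hderiv : ∀ w ∈ s, HasFDerivWithinAt (fun w => gudermannian (g w).re)
      ((Real.cosh (g w).re)⁻¹ • (reCLM.comp (deriv g w • (1 : ℂ →L[ℝ] ℂ)))) s w :=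
    fun w hw => ((hasDerivAt_gudermannian _).comp_hasFDerivAt w (reCLM.hasFDerivAt.comp w
      (hg.differentiableAt (hso.mem_nhds hw)).hasDerivAt.complexToReal_fderiv)).hasFDerivWithinAt
  have hbound : ∀ w ∈ s,
      ‖(Real.cosh (g w).re)⁻¹ • (reCLM.comp (deriv g w • (1 : ℂ →L[ℝ] ℂ)))‖ ≤ K := by
    intro w hw
    refine ContinuousLinearMap.opNorm_le_bound _ hK₀ fun v => ?_
    have hc := Real.cosh_pos (g w).re
    simp only [smul_apply, ContinuousLinearMap.comp_apply, reCLM_apply, one_apply_eq_self,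
      smul_eq_mul, norm_mul, norm_inv, Real.norm_eq_abs, abs_of_pos hc]
    calc (Real.cosh (g w).re)⁻¹ * |(deriv g w * v).re|
        ≤ (Real.cosh (g w).re)⁻¹ * (‖deriv g w‖ * ‖v‖) := by
          gcongr; exact (abs_re_le_norm _).trans (norm_mul _ _).le
      _ ≤ (Real.cosh (g w).re)⁻¹ * (K * Real.cosh (g w).re * ‖v‖) := by gcongr; exact hK w hw
      _ = K * ‖v‖ := by field_simp
  simpa [Real.norm_eq_abs] using hs.norm_image_sub_le_of_norm_hasFDerivWithin_le hderiv hbound hx hy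

lemma norm_add_conj_sq_sub_norm_sub_sq (w w₀ : ℂ) :
    ‖w + conj w₀‖ ^ 2 - ‖w - w₀‖ ^ 2 = 4 * w.re * w₀.re := by
  simp only [← normSq_eq_norm_sq, normSq_apply, add_re, add_im, sub_re, sub_im, conj_re, conj_im]
  ring

lemma add_conj_ne_zero_of_re_pos {w w₀ : ℂ} (hw : 0 < w.re) (hw₀ : 0 < w₀.re) :
    w + conj w₀ ≠ 0 :=
  fun h => by linarith [congrArg re h, add_re w (conj w₀), conj_re w₀, zero_re]

lemma norm_sub_div_add_conj_lt_one {w w₀ : ℂ} (hw : 0 < w.re) (hw₀ : 0 < w₀.re) :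
    ‖(w - w₀) / (w + conj w₀)‖ < 1 := by
  rw [norm_div, div_lt_one (norm_pos_iff.2 (add_conj_ne_zero_of_re_pos hw hw₀)),
    ← pow_lt_pow_iff_left₀ (norm_nonneg _) (norm_nonneg _) two_ne_zero]
  nlinarith [norm_add_conj_sq_sub_norm_sub_sq w w₀, mul_pos hw hw₀]

lemma norm_deriv_le_of_re_pos {g : ℂ → ℂ} {c : ℂ} {r : ℝ} (hr : 0 < r)
    (hg : DifferentiableOn ℂ g (ball c r)) (hpos : ∀ w ∈ ball c r, 0 < (g w).re) :
    ‖deriv g c‖ ≤ 2 * (g c).re / r := by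
  have hc := hpos c (mem_ball_self hr)
  have hden : ∀ w ∈ ball c r, g w + conj (g c) ≠ 0 :=
    fun w hw => add_conj_ne_zero_of_re_pos (hpos w hw) hc
  set F : ℂ → ℂ := fun w => (g w - g c) / (g w + conj (g c))
  have hmaps : MapsTo F (ball c r) (closedBall (F c) 1) := fun w hw => by
    rw [show F c = 0 by simp [F], mem_closedBall_zero_iff]
    exact (norm_sub_div_add_conj_lt_one (hpos w hw) hc).le
  have hF : DifferentiableOn ℂ F (ball c r) := (hg.sub_const _).div (hg.add_const _) hden
  have hschwarz : ‖deriv F c‖ ≤ 1 / r := norm_deriv_le_div_of_mapsTo_ball hF hmaps hr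
  have hgc : HasDerivAt g (deriv g c) c :=
    (hg.differentiableAt (isOpen_ball.mem_nhds (mem_ball_self hr))).hasDerivAt
  have hFderiv : deriv F c = deriv g c / ((2 * (g c).re : ℝ) : ℂ) := by
    have h : HasDerivAt F _ c :=
      (hgc.sub_const (g c)).div (hgc.add_const _) (hden c (mem_ball_self hr))
    have hre : ((g c).re : ℂ) ≠ 0 := ofReal_ne_zero.2 hc.ne'
    rw [h.deriv, sub_self, add_conj]
    push_cast
    field_simp
    ring
  rwa [hFderiv, norm_div, norm_real, Real.norm_of_nonneg (by positivity),
    div_le_iff₀ (by positivity), one_div_mul_eq_div] at hschwarz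

section DiskEstimate

variable {g : ℂ → ℂ} {B : ℝ}

lemma ball_subset_unitDisk (hB : 1 ≤ B) : ball (0 : ℂ) (1 / (2 * B)) ⊆ unitDisk :=
  ball_subset_ball <| by
    rw [div_le_one (by positivity)]
    linarith

lemma re_pos_of_norm_deriv_mul_le_cosh (hB : 1 ≤ B) (hg : DifferentiableOn ℂ g unitDisk)
    (hcosh : ∀ ζ ∈ unitDisk, ‖deriv g ζ‖ * (1 - ‖ζ‖ ^ 2) ≤ B * Real.cosh (g ζ).re)
    (h₀ : 1 ≤ (g 0).re) {w : ℂ} (hw : w ∈ ball (0 : ℂ) (1 / (2 * B))) : 0 < (g w).re := by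
  have hK : ∀ ζ ∈ ball (0 : ℂ) (1 / (2 * B)),
      ‖deriv g ζ‖ ≤ 4 / 3 * B * Real.cosh (g ζ).re := by
    intro ζ hζ
    have hζ' : ‖ζ‖ < 1 / 2 := (mem_ball_zero_iff.1 hζ).trans_le <| by
      rw [div_le_div_iff₀ (by positivity) two_pos]
      linarith
    have h34 : 3 / 4 ≤ 1 - ‖ζ‖ ^ 2 := by nlinarith [norm_nonneg ζ]
    nlinarith [hcosh ζ (ball_subset_unitDisk hB hζ),
      mul_le_mul_of_nonneg_left h34 (norm_nonneg (deriv g ζ))]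
  -- `gd ∘ re ∘ g` moves by less than `2/3 < π/4 ≤ gd (g 0).re` on the ball, so stays positive.
  have hgd := abs_gudermannian_re_sub_le (convex_ball 0 _) isOpen_ball
    (hg.mono (ball_subset_unitDisk hB)) hK (mem_ball_self (by positivity)) hw
  have hw' : 4 / 3 * B * ‖w - 0‖ < 2 / 3 := by
    have := mem_ball_zero_iff.1 hw
    rw [lt_div_iff₀ (by positivity)] at this
    rw [sub_zero]
    linarith
  rw [← gudermannian_strictMono.lt_iff_lt, gudermannian_zero]
  linarith [(abs_le.1 hgd).1, pi_div_four_le_gudermannian h₀, Real.pi_gt_three]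

lemma norm_deriv_zero_le_of_one_le_re (hB : 1 ≤ B) (hg : DifferentiableOn ℂ g unitDisk)
    (hcosh : ∀ ζ ∈ unitDisk, ‖deriv g ζ‖ * (1 - ‖ζ‖ ^ 2) ≤ B * Real.cosh (g ζ).re)
    (h₀ : 1 ≤ (g 0).re) : ‖deriv g 0‖ ≤ 4 * B * (g 0).re :=
  calc ‖deriv g 0‖ ≤ 2 * (g 0).re / (1 / (2 * B)) :=
        norm_deriv_le_of_re_pos (by positivity) (hg.mono (ball_subset_unitDisk hB))
          fun _ hw => re_pos_of_norm_deriv_mul_le_cosh hB hg hcosh h₀ hw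
    _ = 4 * B * (g 0).re := by field_simp; ring

lemma norm_deriv_zero_le (hB : 1 ≤ B) (hg : DifferentiableOn ℂ g unitDisk)
    (hcosh : ∀ ζ ∈ unitDisk, ‖deriv g ζ‖ * (1 - ‖ζ‖ ^ 2) ≤ B * Real.cosh (g ζ).re) :
    ‖deriv g 0‖ ≤ 4 * B * (1 + |(g 0).re|) := by
  rcases le_or_gt |(g 0).re| 1 with hsmall | hlarge
  · have h := hcosh 0 zero_mem_unitDisk
    rw [norm_zero, zero_pow two_ne_zero, sub_zero, mul_one] at h
    have hcosh1 : Real.cosh (g 0).re ≤ 2 :=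
      (Real.cosh_le_cosh.2 (by rwa [abs_one])).trans Real.cosh_one_le_two
    nlinarith [abs_nonneg (g 0).re]
  rcases lt_abs.1 hlarge with hpos | hneg
  · have := norm_deriv_zero_le_of_one_le_re hB hg hcosh hpos.le
    rw [abs_of_pos (by linarith)]
    linarith
  · have := norm_deriv_zero_le_of_one_le_re (g := -g) hB hg.neg
      (fun ζ hζ => by simpa [deriv.neg] using hcosh ζ hζ)
      (by simp only [Pi.neg_apply, neg_re]; linarith)
    simp only [deriv.neg, norm_neg, Pi.neg_apply, neg_re] at this
    rw [abs_of_neg (by linarith)]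
    linarith

end DiskEstimate

lemma sphMetric_mul_norm_le {w D a : ℂ} {B : ℝ} (hB : 0 ≤ B)
    (h : ‖a * D‖ ≤ 4 * B * (1 + |w.re|)) : sphMetric w D * ‖a‖ ≤ 16 * B := by
  have hre : |w.re| ≤ ‖w‖ := abs_re_le_norm w
  rw [norm_mul] at h
  rw [sphMetric, div_mul_eq_mul_div, div_le_iff₀ (by positivity)]
  nlinarith [norm_nonneg w, mul_nonneg hB (sq_nonneg (2 * ‖w‖ - 1)), mul_nonneg hB (norm_nonneg w)]

lemma SemiBloch.normalOn {M : Set E} (hM : IsOpen M) {f : E → ℂ} (hf : DifferentiableOn ℂ f M)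
    (hsb : SemiBloch M f) : NormalOn M f := by
  have hexp : NormalOn M fun z => exp (f z) := by simpa using hsb 1
  obtain ⟨B, hB, hnormal⟩ := hexp.exists_one_le_const
  refine ⟨16 * B, fun z hz ξ => le_mul_kobayashi hM hz (by positivity) ?_⟩
  intro φ a hφ h₀ hd _
  have hg := norm_deriv_zero_le hB (hf.comp hφ.1 hφ.2)
    fun ζ hζ => norm_deriv_comp_mul_le_cosh hM hf (by linarith) hnormal hφ hζ
  have hderiv : deriv (f ∘ φ) 0 = a * fderiv ℂ f z ξ := by
    rw [fderiv_comp_deriv 0 (h₀ ▸ hf.differentiableAt (hM.mem_nhds hz))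
      (hφ.1.differentiableAt (isOpen_ball.mem_nhds zero_mem_unitDisk)), hd, h₀, map_smul,
      smul_eq_mul]
  rw [hderiv, Function.comp_apply, h₀] at hg
  exact sphMetric_mul_norm_le (by linarith) hg

theorem bloch_subset_semiBloch_subset_normal_general (M : Set E) (hM : IsOpen M)
    (f : E → ℂ) (hf : DifferentiableOn ℂ f M) :
    (BlochOn M f → SemiBloch M f) ∧ (SemiBloch M f → NormalOn M f) :=
  ⟨BlochOn.semiBloch hM hf, SemiBloch.normalOn hM hf⟩

/-- On an infinitesimally Kobayashi non-degenerate manifold,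
`𝓑(M) ⊆ 𝓢𝓑(M) ⊆ 𝓝(M)`. -/
theorem bloch_subset_semiBloch_subset_normal (M : Set E) (hM : IsOpen M)
    (hk : KobayashiNondegenerate M) (f : E → ℂ) (hf : DifferentiableOn ℂ f M) :
    (BlochOn M f → SemiBloch M f) ∧ (SemiBloch M f → NormalOn M f) :=
  bloch_subset_semiBloch_subset_normal_general M hM f hf

end
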